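/- Let h and m be positive integers, let G be an additive abelian group, and let A be a finite subset of G with |A| = m such that the h-fold sumset hA satisfies |hA| = C(m+h−1, h). Then the sum of all elements of hA equals C(m+h−1, h−1) times the sum of all elements of A, i.e., ∑_{a ∈ hA} a = C(m+h−1, h−1) • (∑_{a ∈ A} a). -/

import Mathlib

/-! The `h`-fold sumset is the image of `A.sym h`, the multisets of size `h` drawn from `A`, under
summation, and `A.sym h` has exactly `C(m+h-1, h)` elements. So the hypothesis says that summation
is injective on `A.sym h`, and the sum over `hA` is the sum of all these multiset sums. A
transposition of two elements of `A` permutes `A.sym h`, so all elements of `A` occur equally often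
in total; as there are `h * C(m+h-1, h) = m * C(m+h-1, h-1)` occurrences, each `a ∈ A` occurs
`C(m+h-1, h-1)` times. -/

open Finset Pointwise

/-- The `h`-fold sumset `hA`: the set of all sums of `h` elements of `A`
(repetitions allowed). -/
def foldSumset {G : Type*} [AddCommMonoid G] [DecidableEq G] : ℕ → Finset G → Finset G
  | 0, _ => {0}
  | n + 1, A => A + foldSumset n A

/-- The restricted `h`-fold sumset `h^∧A`: the set of all sums of `h` pairwise
distinct elements of `A`, i.e. sums `∑ x ∈ S, x` over `S ⊆ A` with `|S| = h`. -/
def restrictedSumset {G : Type*} [AddCommMonoid G] [DecidableEq G] (h : ℕ) (A : Finset G) :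
    Finset G :=
  (A.powersetCard h).image fun S => S.sum id

/-- The restricted `[0,h]`-fold sumset `[0,h]^∧A = ⋃_{s=0}^{h} s^∧A`. -/
def restrictedIntervalSumset {G : Type*} [AddCommMonoid G] [DecidableEq G] (h : ℕ)
    (A : Finset G) : Finset G :=
  (Finset.range (h + 1)).biUnion fun s => restrictedSumset s A

namespace Finset

variable {α : Type*} [DecidableEq α] {s : Finset α} {n : ℕ}

theorem card_sym (s : Finset α) (n : ℕ) : #(s.sym n) = (#s + n - 1).choose n := by
  conv_lhs => rw [← s.attach_map_val, sym_map, card_map, ← univ_eq_attach, sym_univ, card_univ]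
  rw [Sym.card_sym_eq_choose, Fintype.card_coe]

theorem map_swap_mem_sym {a b : α} (ha : a ∈ s) (hb : b ∈ s) {t : Sym α n} (ht : t ∈ s.sym n) :
    t.map (Equiv.swap a b) ∈ s.sym n := by
  simp only [mem_sym_iff, Sym.mem_map] at ht ⊢
  rintro _ ⟨c, hc, rfl⟩
  rw [Equiv.swap_apply_def]
  split_ifs
  exacts [hb, ha, ht c hc]

theorem sum_count_sym_eq_of_mem {a b : α} (ha : a ∈ s) (hb : b ∈ s) :
    ∑ t ∈ s.sym n, (t : Multiset α).count a = ∑ t ∈ s.sym n, (t : Multiset α).count b := by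
  refine sum_equiv (Sym.equivCongr (Equiv.swap a b)) (fun t => ⟨map_swap_mem_sym ha hb, ?_⟩)
    fun t _ => ?_
  · intro ht
    simpa [Sym.map_map, Function.comp_def] using map_swap_mem_sym ha hb ht
  · simpa using (Multiset.count_map_eq_count' _ (t : Multiset α) (Equiv.swap a b).injective a).symm

theorem sum_sum_count_sym : ∑ a ∈ s, ∑ t ∈ s.sym n, (t : Multiset α).count a = n * #(s.sym n) := by
  rw [sum_comm, mul_comm, ← smul_eq_mul, ← sum_const]
  refine sum_congr rfl fun t ht => ?_
  rw [Multiset.sum_count_eq_card (m := (t : Multiset α)) (mem_sym_iff.1 ht), Sym.card_coe]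

theorem sum_count_sym_eq_choose {a : α} (ha : a ∈ s) (hn : 0 < n) :
    ∑ t ∈ s.sym n, (t : Multiset α).count a = (#s + n - 1).choose (n - 1) := by
  have hcard : #s * ∑ t ∈ s.sym n, (t : Multiset α).count a = n * #(s.sym n) := by
    rw [← sum_sum_count_sym, ← smul_eq_mul, ← sum_const]
    exact sum_congr rfl fun b hb => sum_count_sym_eq_of_mem ha hb
  have hchoose : (#s + n - 1).choose n * n = (#s + n - 1).choose (n - 1) * #s := by
    have := Nat.choose_succ_right_eq (#s + n - 1) (n - 1)
    rwa [Nat.sub_add_cancel hn, show #s + n - 1 - (n - 1) = #s by omega] at this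
  refine Nat.eq_of_mul_eq_mul_right (card_pos.2 ⟨a, ha⟩) ?_
  rw [mul_comm, hcard, card_sym, mul_comm, hchoose]

theorem sum_sum_sym {M : Type*} [AddCommMonoid M] [DecidableEq M] {s : Finset M} (hn : 0 < n) :
    ∑ t ∈ s.sym n, (t : Multiset M).sum = (#s + n - 1).choose (n - 1) • ∑ a ∈ s, a := by
  calc ∑ t ∈ s.sym n, (t : Multiset M).sum
      = ∑ t ∈ s.sym n, ∑ a ∈ s, (t : Multiset M).count a • a :=
        sum_congr rfl fun t ht => sum_multiset_count_of_subset _ _ fun a ha =>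
          mem_sym_iff.1 ht a (Multiset.mem_toFinset.1 ha)
    _ = ∑ a ∈ s, (∑ t ∈ s.sym n, (t : Multiset M).count a) • a := by
        rw [sum_comm]
        simp only [sum_smul]
    _ = (#s + n - 1).choose (n - 1) • ∑ a ∈ s, a := by
        rw [smul_sum]
        exact sum_congr rfl fun a ha => by rw [sum_count_sym_eq_choose ha hn]

end Finset

theorem foldSumset_eq_image_sym {G : Type*} [AddCommMonoid G] [DecidableEq G] (h : ℕ)
    (A : Finset G) : foldSumset h A = (A.sym h).image fun t : Sym G h => (t : Multiset G).sum := by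
  induction h with
  | zero => rfl
  | succ n ih =>
    rw [foldSumset, ih, sym_succ, sup_eq_biUnion, biUnion_image]
    simp only [image_image, Function.comp_def, Sym.coe_cons, Multiset.sum_cons]
    ext
    simp [mem_add]

theorem fold_sumset_sum_eq_general {G : Type*} [AddCommGroup G] [DecidableEq G]
    (h m : ℕ) (hh : 0 < h) (A : Finset G) (hA : A.card = m)
    (hmax : (foldSumset h A).card = Nat.choose (m + h - 1) h) :
    ∑ a ∈ foldSumset h A, a = Nat.choose (m + h - 1) (h - 1) • (∑ a ∈ A, a) := by
  subst hA
  rw [foldSumset_eq_image_sym] at hmax ⊢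
  rw [sum_image (injOn_of_card_image_eq (by rw [hmax, card_sym])), sum_sum_sym hh]

theorem fold_sumset_sum_eq {G : Type*} [AddCommGroup G] [DecidableEq G]
    (h m : ℕ) (hh : 0 < h) (hm : 0 < m) (A : Finset G) (hA : A.card = m)
    (hmax : (foldSumset h A).card = Nat.choose (m + h - 1) h) :
    ∑ a ∈ foldSumset h A, a = Nat.choose (m + h - 1) (h - 1) • (∑ a ∈ A, a) :=
  fold_sumset_sum_eq_general h m hh A hA hmax
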